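/- arXiv:1107.2392 — 4 statements merged into one kernel-verified Lean document; each statement's English description precedes it below -/
import Mathlib

section
/- For smooth functions ω₁,…,ωₙ on an interval and points a,b in that interval, Σ_{i=1}^{n} (-1)^{i-1} L_{ω₁…ω_i}^{[a,b]} · L_{ωₙ…ω_{i+1}}^{[a,b]} = L_{ωₙω_{n-1}…ω₁}^{[a,b]}. -/
/-- Chen iterated integral `L_{ω₁ω₂…ωₚ}^{[a,b]}`, defined recursively by
`L_∅^{[a,b]} = 1` and `L_{ω₁…ωₚ}^{[a,b]} = ∫_a^b ω₁(t) L_{ω₂…ωₚ}^{[a,t]} dt`. -/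
noncomputable def chen : List (ℝ → ℝ) → ℝ → ℝ → ℝ
  | [], _, _ => 1
  | ω :: ωs, a, b => ∫ t in a..b, ω t * chen ωs a t

lemma chen_nil (a b : ℝ) : chen [] a b = 1 := rfl

lemma chen_cons (ω : ℝ → ℝ) (ωs : List (ℝ → ℝ)) (a b : ℝ) :
    chen (ω :: ωs) a b = ∫ t in a..b, ω t * chen ωs a t := rfl

lemma chen_continuous (l : List (ℝ → ℝ)) (hl : ∀ ω ∈ l, Continuous ω) (a : ℝ) :
    Continuous (chen l a) := by
  induction l with
  | nil => simpa [chen] using continuous_const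
  | cons ω v ih =>
    have hv : Continuous (chen v a) := ih (fun f hf => hl f (List.mem_cons_of_mem _ hf))
    have hint : Continuous fun t => ω t * chen v a t :=
      (hl ω (List.mem_cons_self)).mul hv
    have h1 : ∀ b, HasDerivAt (fun u => ∫ t in a..u, ω t * chen v a t) (ω b * chen v a b) b := by
      intro b
      exact intervalIntegral.integral_hasDerivAt_right (hint.intervalIntegrable a b)
        (hint.stronglyMeasurableAtFilter _ _) hint.continuousAt
    have : Continuous fun u => ∫ t in a..u, ω t * chen v a t :=
      continuous_iff_continuousAt.2 fun b => (h1 b).continuousAt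
    exact this

lemma chen_hasDerivAt (ω : ℝ → ℝ) (v : List (ℝ → ℝ))
    (hω : Continuous ω) (hv : ∀ f ∈ v, Continuous f) (a b : ℝ) :
    HasDerivAt (fun u => chen (ω :: v) a u) (ω b * chen v a b) b := by
  have hint : Continuous fun t => ω t * chen v a t := hω.mul (chen_continuous v hv a)
  simpa [chen_cons] using
    intervalIntegral.integral_hasDerivAt_right (hint.intervalIntegrable a b)
      (hint.stronglyMeasurableAtFilter _ _) hint.continuousAt

lemma chen_same (l : List (ℝ → ℝ)) (hne : l ≠ []) (a : ℝ) : chen l a a = 0 := by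
  cases l with
  | nil => exact absurd rfl hne
  | cons ω v => simp [chen_cons]

/-- the full alternating sum, including the `i = 0` term -/
noncomputable def altSum (l : List (ℝ → ℝ)) (a b : ℝ) : ℝ :=
  ∑ i ∈ Finset.range (l.length + 1),
    (-1 : ℝ) ^ i * chen (l.take i) a b * chen ((l.drop i).reverse) a b

lemma altSum_same (l : List (ℝ → ℝ)) (hne : l ≠ []) (a : ℝ) : altSum l a a = 0 := by
  apply Finset.sum_eq_zero
  intro i hi
  rcases Nat.eq_zero_or_pos i with h0 | hpos
  · subst h0
    have hrev : l.reverse ≠ [] := by simpa using hne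
    simp [chen_same _ hrev]
  · have h : l.take i ≠ [] := by
      cases l with
      | nil => exact absurd rfl hne
      | cons ω v =>
        obtain ⟨j, rfl⟩ := Nat.exists_eq_add_of_lt hpos
        simp [List.take_succ_cons]
    simp [chen_same _ h]

lemma altSum_eq_zero (a : ℝ) :
    ∀ n (l : List (ℝ → ℝ)), l.length = n → l ≠ [] →
      (∀ ω ∈ l, Continuous ω) → ∀ b, altSum l a b = 0 := by
  intro n
  induction n using Nat.strong_induction_on with
  | _ n IH =>
  intro l hlen hne hl b₀
  cases l with
  | nil => exact absurd rfl hne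
  | cons ω v =>
  cases v with
  | nil =>
    simp [altSum, Finset.sum_range_succ, chen]
  | cons ω₂ w =>
  set v : List (ℝ → ℝ) := ω₂ :: w with hv
  set l : List (ℝ → ℝ) := ω :: v with hldef
  have hlne : l ≠ [] := by simp [hldef]
  set m : ℕ := l.length with hm
  have hm2 : 2 ≤ m := by simp [hm, hldef, hv]
  set μ : ℝ → ℝ := l.getLast hlne with hμ
  have hω : Continuous ω := hl ω (List.mem_cons_self)
  have hvc : ∀ f ∈ v, Continuous f := fun f hf => hl f (List.mem_cons_of_mem _ hf)
  have hμc : Continuous μ := hl μ (List.getLast_mem hlne)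
  have hdlc : ∀ f ∈ l.dropLast, Continuous f := fun f hf => hl f (List.dropLast_subset _ hf)
  have hvlen : v.length = m - 1 := by simp [hm, hldef]
  have hdllen : l.dropLast.length = m - 1 := by simp [hm]
  have hvne : v ≠ [] := by simp [hv]
  have hdlne : l.dropLast ≠ [] := by
    intro h
    rw [h] at hdllen
    simp at hdllen
    omega
  have hdrop_rev : ∀ i, i < m → (l.drop i).reverse = μ :: (l.dropLast.drop i).reverse := by
    intro i hi
    conv_lhs => rw [← List.dropLast_append_getLast hlne]
    rw [List.drop_append_of_le_length (by omega : i ≤ l.dropLast.length)]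
    simp [hμ]
  have htake_dl : ∀ i, i < m → l.take i = l.dropLast.take i := by
    intro i hi
    rw [List.dropLast_eq_take, List.take_take]
    congr 1
    omega
  have hkey : ∀ b : ℝ, HasDerivAt (fun u => altSum l a u) 0 b := by
    intro b
    set D : ℕ → ℝ := fun i =>
      ((-1 : ℝ) ^ i * (if i = 0 then 0 else ω b * chen (v.take (i - 1)) a b)) *
          chen ((l.drop i).reverse) a b
        + ((-1 : ℝ) ^ i * chen (l.take i) a b) *
          (if i < m then μ b * chen ((l.dropLast.drop i).reverse) a b else 0) with hD
    have hterm : ∀ i ∈ Finset.range (m + 1),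
        HasDerivAt (fun u => (-1 : ℝ) ^ i * chen (l.take i) a u * chen ((l.drop i).reverse) a u)
          (D i) b := by
      intro i hi
      have hi' : i ≤ m := Nat.lt_succ_iff.mp (Finset.mem_range.mp hi)
      have hf : HasDerivAt (fun u => chen (l.take i) a u)
          (if i = 0 then 0 else ω b * chen (v.take (i - 1)) a b) b := by
        rcases i with _ | j
        · simp only [if_pos rfl, List.take_zero]
          exact (hasDerivAt_const b (1 : ℝ)).congr_deriv rfl
        · rw [if_neg (Nat.succ_ne_zero j)]
          have ht : l.take (j + 1) = ω :: v.take j := by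
            simp [hldef, List.take_succ_cons]
          rw [ht]
          have : j + 1 - 1 = j := rfl
          rw [this]
          exact chen_hasDerivAt ω (v.take j) hω
            (fun f hf => hvc f (List.take_subset _ _ hf)) a b
      have hg : HasDerivAt (fun u => chen ((l.drop i).reverse) a u)
          (if i < m then μ b * chen ((l.dropLast.drop i).reverse) a b else 0) b := by
        by_cases him : i < m
        · rw [if_pos him]
          rw [show (fun u => chen ((l.drop i).reverse) a u)
              = fun u => chen (μ :: (l.dropLast.drop i).reverse) a u by
            funext u; rw [hdrop_rev i him]]
          exact chen_hasDerivAt μ _ hμc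
            (fun f hf => hdlc f (List.drop_subset _ _ (List.mem_reverse.mp hf))) a b
        · rw [if_neg him]
          have him' : i = m := by omega
          subst him'
          have hde : l.drop l.length = [] := by simp
          rw [show (fun u => chen ((l.drop l.length).reverse) a u) = fun _ => (1 : ℝ) by
            funext u; rw [hde]; rfl]
          exact hasDerivAt_const b 1
      exact (hf.const_mul ((-1 : ℝ) ^ i)).mul hg
    have hS : HasDerivAt (fun u => altSum l a u) (∑ i ∈ Finset.range (m + 1), D i) b := by
      have := HasDerivAt.fun_sum hterm
      simpa [altSum] using this
    have hDzero : (∑ i ∈ Finset.range (m + 1), D i) = 0 := by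
      have hsplit : (∑ i ∈ Finset.range (m + 1), D i)
          = (∑ i ∈ Finset.range (m + 1),
              ((-1 : ℝ) ^ i * (if i = 0 then 0 else ω b * chen (v.take (i - 1)) a b)) *
                chen ((l.drop i).reverse) a b)
            + (∑ i ∈ Finset.range (m + 1),
              ((-1 : ℝ) ^ i * chen (l.take i) a b) *
                (if i < m then μ b * chen ((l.dropLast.drop i).reverse) a b else 0)) := by
        rw [← Finset.sum_add_distrib]
      rw [hsplit]
      have h1 : (∑ i ∈ Finset.range (m + 1),
          ((-1 : ℝ) ^ i * (if i = 0 then 0 else ω b * chen (v.take (i - 1)) a b)) *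
            chen ((l.drop i).reverse) a b)
          = -(ω b) * altSum v a b := by
        rw [Finset.sum_range_succ']
        have e0 : ((-1 : ℝ) ^ (0 : ℕ) *
            (if (0 : ℕ) = 0 then (0:ℝ) else ω b * chen (v.take (0 - 1)) a b)) *
              chen ((l.drop 0).reverse) a b = 0 := by simp
        rw [e0, add_zero, altSum, Finset.mul_sum]
        have hmv : v.length + 1 = m := by omega
        rw [hmv]
        refine Finset.sum_congr rfl fun i hi => ?_
        rw [if_neg (Nat.succ_ne_zero i), hldef, List.drop_succ_cons, Nat.add_sub_cancel]
        ring
      have h2 : (∑ i ∈ Finset.range (m + 1),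
          ((-1 : ℝ) ^ i * chen (l.take i) a b) *
            (if i < m then μ b * chen ((l.dropLast.drop i).reverse) a b else 0))
          = μ b * altSum l.dropLast a b := by
        rw [Finset.sum_range_succ, if_neg (lt_irrefl m), mul_zero, add_zero]
        have hc : ∀ i ∈ Finset.range m,
            ((-1 : ℝ) ^ i * chen (l.take i) a b) *
              (if i < m then μ b * chen ((l.dropLast.drop i).reverse) a b else 0)
            = μ b * ((-1 : ℝ) ^ i * chen (l.dropLast.take i) a b *
                chen ((l.dropLast.drop i).reverse) a b) := by
          intro i hi
          have him : i < m := Finset.mem_range.mp hi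
          rw [if_pos him, htake_dl i him]
          ring
        rw [Finset.sum_congr rfl hc, ← Finset.mul_sum, altSum, hdllen]
        have hm1 : m - 1 + 1 = m := by omega
        rw [hm1]
      rw [h1, h2,
        IH v.length (by omega) v rfl hvne hvc b,
        IH l.dropLast.length (by rw [hdllen]; omega) l.dropLast rfl hdlne hdlc b]
      ring
    rw [← hDzero]
    exact hS
  have hconst := is_const_of_deriv_eq_zero
    (fun x => (hkey x).differentiableAt) (fun x => (hkey x).deriv) b₀ a
  calc altSum l a b₀ = altSum l a a := hconst
    _ = 0 := altSum_same l hlne a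

/-- `Σ_{i=1}^{n} (-1)^{i-1} L_{ω₁…ω_i}^{[a,b]} · L_{ωₙ…ω_{i+1}}^{[a,b]} = L_{ωₙ…ω₁}^{[a,b]}`. -/
theorem chen_alternating_sum (l : List (ℝ → ℝ)) (hne : l ≠ [])
    (hl : ∀ ω ∈ l, ContDiff ℝ (⊤ : ℕ∞) ω) (a b : ℝ) :
    ∑ i ∈ Finset.range l.length,
        (-1 : ℝ) ^ i * chen (l.take (i + 1)) a b * chen (l.drop (i + 1)).reverse a b
      = chen l.reverse a b := by
  have hlc : ∀ ω ∈ l, Continuous ω := fun ω hω => (hl ω hω).continuous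
  have h0 : altSum l a b = 0 := altSum_eq_zero a l.length l rfl hne hlc b
  rw [altSum, Finset.sum_range_succ'] at h0
  simp only [List.take_zero, List.drop_zero, chen_nil, pow_zero, one_mul, mul_one] at h0
  have h1 : ∑ i ∈ Finset.range l.length,
      (-1 : ℝ) ^ (i + 1) * chen (l.take (i + 1)) a b * chen (l.drop (i + 1)).reverse a b
      = - ∑ i ∈ Finset.range l.length,
        (-1 : ℝ) ^ i * chen (l.take (i + 1)) a b * chen (l.drop (i + 1)).reverse a b := by
    rw [← Finset.sum_neg_distrib]
    refine Finset.sum_congr rfl fun i hi => ?_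
    ring
  rw [h1] at h0
  linarith
end

section
/- Let λ = (λ₁,…,λₙ) be a partition of length at most n and let λ⁽⁰⁾ = (λ₂,…,λₙ) denote its bottom partition. For any real numbers u₁,…,u_{n−1}, x, y, the identity (x−y)·S_λ(U,x,y)·S_{λ⁽⁰⁾}(U) = x·S_λ(U,x)·S_{λ⁽⁰⁾}(U,y) − y·S_λ(U,y)·S_{λ⁽⁰⁾}(U,x) holds, where U = (u₁,…,u_{n−1}). -/
/-!
Write each Jacobi–Trudi determinant by rows, row `j` being `(h_{λᵢ - i + j})ᵢ`. Because
`h_d(U, z) = h_d(U) + z h_{d-1}(U, z)`, subtracting `z` times row `j - 1` from row `j`, bottom-up,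
removes the variable `z` from every row but the first. Doing this once or twice (the second time
from row `2` on), and bordering the determinants of `λ⁽⁰⁾` by the unit row `e₀`, all six
determinants of the identity become values of the alternating bilinear form
`D(a, b) = det(a, b, v₂, …, vₙ₋₁)` with the common rows `vⱼ = (h_{λᵢ - i + j}(U))ᵢ`.
With `c_z = (h_{λᵢ - i}(U, z))ᵢ`, one has `row₁(U, z) = v₁ + z c_z` and
`(x - y) c_{x,y} = x c_x - y c_y`; after expanding, the identity is `x y` times the three-term
Plücker relation `D(a,b) D(c,d) - D(a,c) D(b,d) + D(a,d) D(b,c) = 0` for `a = e₀`, `b = c_y`,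
`c = c_x`, `d = v₁`, which is the Desnanot–Jacobi identity in this guise.
-/

/-- Complete homogeneous symmetric polynomial of degree `m` in `n` real variables. -/
noncomputable def hh (n m : ℕ) (u : Fin n → ℝ) : ℝ :=
  ∑ c ∈ Finset.Nat.antidiagonalTuple n m, ∏ i, u i ^ c i

/-- `hh` extended by `0` to negative degrees. -/
noncomputable def hZ (n : ℕ) (m : ℤ) (u : Fin n → ℝ) : ℝ :=
  if 0 ≤ m then hh n m.toNat u else 0

/-- Schur polynomial of the partition `lam` (of length at most `l`), evaluated at `k`
real variables, defined via the Jacobi–Trudi determinant. -/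
noncomputable def schur {l : ℕ} (lam : Fin l → ℕ) {k : ℕ} (u : Fin k → ℝ) : ℝ :=
  Matrix.det (Matrix.of fun i j : Fin l => hZ k ((lam i : ℤ) - (i : ℤ) + (j : ℤ)) u)

open Finset Matrix

theorem hh_zero (n : ℕ) (u : Fin n → ℝ) : hh n 0 u = 1 := by
  simp [hh, Finset.Nat.antidiagonalTuple_zero_right]

theorem hh_comp_perm (n d : ℕ) (u : Fin n → ℝ) (e : Equiv.Perm (Fin n)) :
    hh n d (u ∘ e) = hh n d u := by
  refine Finset.sum_equiv (e.arrowCongr (Equiv.refl ℕ)) (fun c => ?_) (fun c _ => ?_)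
  · simp only [Finset.Nat.mem_antidiagonalTuple, Equiv.arrowCongr_apply, Equiv.coe_refl,
      Function.comp_def, id, Equiv.sum_comp e.symm c]
  · calc ∏ i, (u ∘ e) i ^ c i = ∏ i, u (e i) ^ c (e.symm (e i)) := by simp
      _ = _ := Equiv.prod_comp e fun i => u i ^ c (e.symm i)

theorem hh_cons (n d : ℕ) (z : ℝ) (u : Fin n → ℝ) :
    hh (n + 1) d (Fin.cons z u) = ∑ p ∈ antidiagonal d, z ^ p.1 * hh n p.2 u := by
  simp only [hh, Finset.mul_sum]
  rw [Finset.sum_sigma']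
  refine Finset.sum_nbij' (fun c => ⟨(c 0, ∑ i, Fin.tail c i), Fin.tail c⟩)
    (fun pc => Fin.cons pc.1.1 pc.2) (fun c hc => ?_) (fun pc hpc => ?_) (fun c _ => ?_)
    (fun pc hpc => ?_) (fun c _ => ?_)
  · rw [Finset.Nat.mem_antidiagonalTuple, Fin.sum_univ_succ] at hc
    simp [Finset.Nat.mem_antidiagonalTuple, hc, Fin.tail]
  · simp only [Finset.mem_sigma, Finset.HasAntidiagonal.mem_antidiagonal,
      Finset.Nat.mem_antidiagonalTuple] at hpc
    simp [Finset.Nat.mem_antidiagonalTuple, Fin.sum_univ_succ, hpc.2, hpc.1]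
  · exact Fin.cons_self_tail c
  · simp only [Finset.mem_sigma, Finset.HasAntidiagonal.mem_antidiagonal,
      Finset.Nat.mem_antidiagonalTuple] at hpc
    ext <;> simp [hpc.2]
  · simp [Fin.prod_univ_succ, Fin.tail]

theorem hh_cons_succ (n d : ℕ) (z : ℝ) (u : Fin n → ℝ) :
    hh (n + 1) (d + 1) (Fin.cons z u) = hh n (d + 1) u + z * hh (n + 1) d (Fin.cons z u) := by
  rw [hh_cons, hh_cons, Finset.Nat.antidiagonal_succ, Finset.sum_cons, Finset.sum_map,
    Finset.mul_sum]
  simp [pow_succ, mul_comm, mul_left_comm]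

theorem hh_snoc_succ (n d : ℕ) (z : ℝ) (u : Fin n → ℝ) :
    hh (n + 1) (d + 1) (Fin.snoc u z) = hh n (d + 1) u + z * hh (n + 1) d (Fin.snoc u z) := by
  have h : (Fin.snoc u z : Fin (n + 1) → ℝ) = Fin.cons z u ∘ finRotate (n + 1) := by
    rw [Fin.snoc_eq_cons_rotate]; rfl
  rw [h, hh_comp_perm, hh_comp_perm, hh_cons_succ]

theorem hZ_snoc (n : ℕ) (d : ℤ) (u : Fin n → ℝ) (z : ℝ) :
    hZ (n + 1) d (Fin.snoc u z) = hZ n d u + z * hZ (n + 1) (d - 1) (Fin.snoc u z) := by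
  rcases lt_trichotomy d 0 with h | rfl | h
  · simp only [hZ, if_neg h.not_ge, if_neg (show ¬ 0 ≤ d - 1 by omega)]
    ring
  · simp [hZ, hh_zero]
  · obtain ⟨d, rfl⟩ : ∃ e : ℕ, d = e + 1 := ⟨(d - 1).toNat, by omega⟩
    have h1 : ((d : ℤ) + 1).toNat = d + 1 := by omega
    have h2 : ((d : ℤ) + 1 - 1).toNat = d := by omega
    simp only [hZ, if_pos (show (0 : ℤ) ≤ d + 1 by omega),
      if_pos (show (0 : ℤ) ≤ d + 1 - 1 by omega), h1, h2]
    exact hh_snoc_succ n d z u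

theorem hZ_comp_perm (n : ℕ) (d : ℤ) (u : Fin n → ℝ) (e : Equiv.Perm (Fin n)) :
    hZ n d (u ∘ e) = hZ n d u := by
  simp only [hZ, hh_comp_perm]

theorem Fin.snoc_snoc_comp_swap {α : Type*} {n : ℕ} (u : Fin n → α) (x y : α) :
    (Fin.snoc (Fin.snoc u y) x : Fin (n + 2) → α) ∘
        Equiv.swap (Fin.last (n + 1)) (Fin.last n).castSucc =
      Fin.snoc (Fin.snoc u x) y := by
  ext i
  induction i using Fin.lastCases with
  | last => simp
  | cast j =>
    induction j using Fin.lastCases with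
    | last => simp
    | cast k =>
      rw [Function.comp_apply, Equiv.swap_apply_of_ne_of_ne (Fin.castSucc_ne_last _)
        ((Fin.castSucc_injective _).ne (Fin.castSucc_ne_last k))]
      simp

theorem hZ_snoc_snoc_comm (n : ℕ) (d : ℤ) (u : Fin n → ℝ) (x y : ℝ) :
    hZ (n + 2) d (Fin.snoc (Fin.snoc u x) y) = hZ (n + 2) d (Fin.snoc (Fin.snoc u y) x) := by
  rw [← Fin.snoc_snoc_comp_swap u x y, hZ_comp_perm]

theorem sub_mul_hZ_snoc_snoc (n : ℕ) (d : ℤ) (u : Fin n → ℝ) (x y : ℝ) :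
    (x - y) * hZ (n + 2) d (Fin.snoc (Fin.snoc u x) y) =
      x * hZ (n + 1) d (Fin.snoc u x) - y * hZ (n + 1) d (Fin.snoc u y) := by
  have hy := hZ_snoc (n + 1) d (Fin.snoc u x) y
  have hx := hZ_snoc (n + 1) d (Fin.snoc u y) x
  rw [hZ_snoc_snoc_comm n d u y x, hZ_snoc_snoc_comm n (d - 1) u y x] at hx
  linear_combination x * hy - y * hx

namespace Matrix

variable {R : Type*} [CommRing R]

theorem det_rows_eq_of_succ_eq_add_smul {n : ℕ} (f g : ℕ → Fin n → R) (z : R) (k : ℕ)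
    (hfg : ∀ j, k ≤ j → f (j + 1) = g (j + 1) + z • f j) :
    det (of fun i : Fin n => f i) = det (of fun i : Fin n => if (i : ℕ) ≤ k then f i else g i) := by
  suffices key : ∀ t, det (of fun i : Fin n => if (i : ℕ) ≤ k + t then f i else g i) =
      det (of fun i : Fin n => if (i : ℕ) ≤ k then f i else g i) by
    rw [← key n]
    congr with i : 2
    rw [if_pos (by omega)]
  intro t
  induction t with
  | zero => rfl
  | succ t ih =>
    rw [← ih]
    by_cases ht : k + t + 1 < n
    · set A : Matrix (Fin n) (Fin n) R :=
        of fun i : Fin n => if (i : ℕ) ≤ k + (t + 1) then f i else g i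
      have hrow : (of fun i : Fin n => if (i : ℕ) ≤ k + t then f i else g i) =
          A.updateRow ⟨k + t + 1, ht⟩ (A ⟨k + t + 1, ht⟩ + (-z) • A ⟨k + t, by omega⟩) := by
        ext i l
        by_cases hi : (i : ℕ) = k + t + 1
        · have : i = ⟨k + t + 1, ht⟩ := Fin.ext hi
          subst this
          simp [A, hfg (k + t) (by omega)]
        · rw [updateRow_ne (fun h => hi (congrArg Fin.val h))]
          simp only [A, of_apply]
          rw [if_congr (show (i : ℕ) ≤ k + t ↔ (i : ℕ) ≤ k + (t + 1) by omega) rfl rfl]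
      rw [hrow, det_updateRow_add_smul_self A (by simp)]
    · congr with i : 2
      rw [if_pos (by omega), if_pos (by omega)]

theorem sum_det_comp_succAbove_smul_eq_zero {N : ℕ} (w : Fin (N + 1) → Fin N → R) :
    ∑ i : Fin (N + 1), ((-1) ^ (i : ℕ) * det (of (w ∘ i.succAbove))) • w i = 0 := by
  ext r
  let A : Matrix (Fin (N + 1)) (Fin (N + 1)) R := of fun i => Fin.cons (w i r) (w i)
  -- Column `0` of `A` repeats column `r + 1`; expand its determinant along column `0`.
  have hA : det A = 0 := det_zero_of_column_eq (Fin.succ_ne_zero r).symm (by simp [A])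
  rw [det_succ_column_zero] at hA
  rw [Finset.sum_apply, Pi.zero_apply, ← hA]
  simp only [Pi.smul_apply, smul_eq_mul]
  refine sum_congr rfl fun i _ => ?_
  have hsub : A.submatrix i.succAbove Fin.succ = of (w ∘ i.succAbove) := by ext; simp [A]
  rw [hsub]
  simp only [A, of_apply, Fin.cons_zero]
  ring

theorem det_vecCons_single_zero {n : ℕ} (v : Fin n → Fin (n + 1) → R) :
    det (of (vecCons (Pi.single 0 1) v)) = det (of fun j => v j ∘ Fin.succ) := by
  rw [det_succ_row_zero, Fin.sum_univ_succ, Finset.sum_eq_zero (fun j _ => by simp)]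
  simp [submatrix, Function.comp_def]

def twoRowDet {k : ℕ} (V : Fin k → Fin (k + 2) → R) :
    (Fin (k + 2) → R) →ₗ[R] (Fin (k + 2) → R) →ₗ[R] R :=
  LinearMap.mk₂ R (fun a b => (detRowAlternating.curryLeft a).curryLeft b V)
    (fun a a' b => by simp) (fun c a b => by simp) (fun a b b' => by simp) (fun c a b => by simp)

variable {k : ℕ} (V : Fin k → Fin (k + 2) → R)

theorem twoRowDet_apply (a b : Fin (k + 2) → R) :
    twoRowDet V a b = det (of (vecCons a (vecCons b V))) :=
  rfl

theorem twoRowDet_self (a : Fin (k + 2) → R) : twoRowDet V a a = 0 :=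
  det_zero_of_row_eq (i := 0) (j := 1) Fin.zero_ne_one rfl

theorem twoRowDet_apply_right_eq_zero (a : Fin (k + 2) → R) (t : Fin k) :
    twoRowDet V a (V t) = 0 :=
  det_zero_of_row_eq (i := 1) (j := t.succ.succ) (by simp [Fin.ext_iff]) (by simp)

theorem twoRowDet_pluecker (a b c d : Fin (k + 2) → R) :
    twoRowDet V a b * twoRowDet V c d - twoRowDet V a c * twoRowDet V b d +
      twoRowDet V a d * twoRowDet V b c = 0 := by
  -- the `k + 3` rows `b, c, d, V` in dimension `k + 2` are linearly dependent, and applying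
  -- `twoRowDet V a` to that dependency kills the `V`-terms
  have h := congrArg (twoRowDet V a)
    (sum_det_comp_succAbove_smul_eq_zero (vecCons b (vecCons c (vecCons d V))))
  have hrem {m : ℕ} (x : Fin (k + 2) → R) (p : Fin (m + 1) → Fin (k + 2) → R) (i : Fin (m + 1)) :
      Fin.removeNth i.succ (Fin.cons x p : Fin (m + 2) → Fin (k + 2) → R) =
        (Fin.cons x (Fin.removeNth i p) : Fin (m + 1) → Fin (k + 2) → R) :=
    Fin.cons_comp_succ_succAbove x p i
  rw [map_sum, map_zero, Fin.sum_univ_succ, Fin.sum_univ_succ, Fin.sum_univ_succ] at h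
  simp only [map_smul, smul_eq_mul, cons_val_zero, cons_val_succ, twoRowDet_apply_right_eq_zero,
    mul_zero, sum_const_zero, add_zero, Fin.val_succ, Fin.val_zero, pow_succ, pow_zero] at h
  simp only [twoRowDet_apply, Matrix.vecCons, Fin.cons_comp_succ_succAbove, Fin.succAbove_zero,
    Fin.cons_comp_succ, hrem, Fin.removeNth_zero, Fin.tail_cons] at h ⊢
  linear_combination h

end Matrix

noncomputable def shiftedParts {n : ℕ} (lam : Fin n → ℕ) : Fin n → ℤ := fun i => (lam i : ℤ) - i

noncomputable def hRow {n k : ℕ} (p : Fin n → ℤ) (u : Fin k → ℝ) (j : ℕ) : Fin n → ℝ :=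
  fun i => hZ k (p i + j) u

section JacobiTrudi

variable {n k : ℕ}

theorem hRow_snoc_succ (p : Fin n → ℤ) (u : Fin k → ℝ) (z : ℝ) (j : ℕ) :
    hRow p (Fin.snoc u z) (j + 1) = hRow p u (j + 1) + z • hRow p (Fin.snoc u z) j := by
  ext i
  simp only [hRow, Pi.add_apply, Pi.smul_apply, smul_eq_mul]
  rw [hZ_snoc]
  congr 3
  push_cast
  ring

theorem sub_smul_hRow_snoc_snoc (p : Fin n → ℤ) (u : Fin k → ℝ) (x y : ℝ) (j : ℕ) :
    (x - y) • hRow p (Fin.snoc (Fin.snoc u x) y) j =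
      x • hRow p (Fin.snoc u x) j - y • hRow p (Fin.snoc u y) j := by
  ext i
  exact sub_mul_hZ_snoc_snoc k _ u x y

theorem schur_eq_det_hRow (lam : Fin n → ℕ) (u : Fin k → ℝ) :
    schur lam u = det (of fun j : Fin n => hRow (shiftedParts lam) u j) := by
  rw [schur, ← det_transpose]
  congr with j i

theorem schur_tail_eq_det (lam : Fin (n + 1) → ℕ) (u : Fin k → ℝ) :
    schur (fun i : Fin n => lam i.succ) u =
      det (of (vecCons (Pi.single 0 1) fun j : Fin n => hRow (shiftedParts lam) u (j + 1))) := by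
  rw [det_vecCons_single_zero, schur_eq_det_hRow]
  congr with j i
  simp only [Function.comp_apply, hRow, shiftedParts, Fin.val_succ]
  push_cast
  ring_nf

theorem schur_of_fin_zero (lam : Fin 0 → ℕ) (u : Fin k → ℝ) : schur lam u = 1 :=
  det_isEmpty

theorem schur_of_fin_one (lam : Fin 1 → ℕ) (u : Fin k → ℝ) : schur lam u = hZ k (lam 0) u := by
  simp [schur]

end JacobiTrudi

section TwoRows

variable {k : ℕ} (lam : Fin (k + 2) → ℕ) (U : Fin (k + 1) → ℝ)

local notation "V" => fun t : Fin k => hRow (shiftedParts lam) U (t + 2)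

theorem schur_snoc_eq_twoRowDet (z : ℝ) :
    schur lam (Fin.snoc U z) =
      twoRowDet V (hRow (shiftedParts lam) (Fin.snoc U z) 0) (hRow (shiftedParts lam) U 1) := by
  rw [schur_eq_det_hRow, det_rows_eq_of_succ_eq_add_smul _ (hRow _ U) z 0
    (fun j _ => hRow_snoc_succ _ U z j), twoRowDet_apply]
  congr 2
  ext i : 1
  refine Fin.cases ?_ (Fin.cases ?_ fun t => ?_) i <;> simp

theorem schur_snoc_snoc_eq_twoRowDet (x y : ℝ) :
    schur lam (Fin.snoc (Fin.snoc U x) y) =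
      twoRowDet V (hRow (shiftedParts lam) (Fin.snoc (Fin.snoc U x) y) 0)
        (hRow (shiftedParts lam) (Fin.snoc U x) 1) := by
  rw [schur_eq_det_hRow, det_rows_eq_of_succ_eq_add_smul _ (hRow _ (Fin.snoc U x)) y 0
    (fun j _ => hRow_snoc_succ _ _ y j), det_rows_eq_of_succ_eq_add_smul
    (fun j => if j ≤ 0 then hRow (shiftedParts lam) (Fin.snoc (Fin.snoc U x) y) j
      else hRow (shiftedParts lam) (Fin.snoc U x) j) (hRow (shiftedParts lam) U) x 1
    (fun j hj => by simpa [Nat.one_le_iff_ne_zero.mp hj] using hRow_snoc_succ _ U x j),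
    twoRowDet_apply]
  congr 2
  ext i : 1
  refine Fin.cases ?_ (Fin.cases ?_ fun t => ?_) i <;> simp

theorem schur_tail_eq_twoRowDet :
    schur (fun i : Fin (k + 1) => lam i.succ) U =
      twoRowDet V (Pi.single 0 1) (hRow (shiftedParts lam) U 1) := by
  rw [schur_tail_eq_det, twoRowDet_apply]
  congr 2
  ext i : 1
  refine Fin.cases ?_ (Fin.cases ?_ fun t => ?_) i <;> simp

theorem schur_tail_snoc_eq_twoRowDet (z : ℝ) :
    schur (fun i : Fin (k + 1) => lam i.succ) (Fin.snoc U z) =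
      twoRowDet V (Pi.single 0 1) (hRow (shiftedParts lam) (Fin.snoc U z) 1) := by
  let f : ℕ → Fin (k + 2) → ℝ := fun j =>
    if j = 0 then Pi.single 0 1 else hRow (shiftedParts lam) (Fin.snoc U z) j
  have hf : vecCons (Pi.single 0 1)
      (fun j : Fin (k + 1) => hRow (shiftedParts lam) (Fin.snoc U z) (j + 1)) =
        fun i : Fin (k + 2) => f i := by
    ext i : 1
    refine Fin.cases ?_ (fun t => ?_) i <;> simp [f]
  rw [schur_tail_eq_det, hf, det_rows_eq_of_succ_eq_add_smul f (hRow (shiftedParts lam) U) z 1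
    (fun j hj => by simpa [f, Nat.one_le_iff_ne_zero.mp hj] using hRow_snoc_succ _ U z j),
    twoRowDet_apply]
  congr 2
  ext i : 1
  refine Fin.cases ?_ (Fin.cases ?_ fun t => ?_) i <;> simp [f]

end TwoRows

theorem schur_condensation_general (m : ℕ) (lam : Fin (m + 1) → ℕ)
    (U : Fin m → ℝ) (x y : ℝ) :
    (x - y) * schur lam (Fin.snoc (Fin.snoc U x : Fin (m + 1) → ℝ) y : Fin (m + 2) → ℝ)
        * schur (fun i : Fin m => lam i.succ) U
      = x * schur lam (Fin.snoc U x : Fin (m + 1) → ℝ)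
            * schur (fun i : Fin m => lam i.succ) (Fin.snoc U y : Fin (m + 1) → ℝ)
        - y * schur lam (Fin.snoc U y : Fin (m + 1) → ℝ)
            * schur (fun i : Fin m => lam i.succ) (Fin.snoc U x : Fin (m + 1) → ℝ) := by
  cases m with
  | zero =>
    simp only [schur_of_fin_zero, schur_of_fin_one, mul_one]
    exact sub_mul_hZ_snoc_snoc 0 _ U x y
  | succ k =>
    rw [schur_snoc_snoc_eq_twoRowDet, schur_snoc_eq_twoRowDet, schur_snoc_eq_twoRowDet,
      schur_tail_eq_twoRowDet, schur_tail_snoc_eq_twoRowDet, schur_tail_snoc_eq_twoRowDet]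
    set p := shiftedParts lam
    set D := twoRowDet fun t : Fin k => hRow p U (t + 2)
    set c : ℝ → Fin (k + 2) → ℝ := fun z => hRow p (Fin.snoc U z) 0
    have hrow₁ (z : ℝ) : hRow p (Fin.snoc U z) 1 = hRow p U 1 + z • c z := hRow_snoc_succ p U z 0
    have hcross : (x - y) * D (hRow p (Fin.snoc (Fin.snoc U x) y) 0) (hRow p (Fin.snoc U x) 1) =
        D (x • c x - y • c y) (hRow p (Fin.snoc U x) 1) := by
      rw [← sub_smul_hRow_snoc_snoc p U x y 0, map_smul, LinearMap.smul_apply, smul_eq_mul]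
    have hself : D (c x) (c x) = 0 := twoRowDet_self _ _
    rw [hcross, hrow₁, hrow₁]
    simp only [map_add, map_sub, map_smul, LinearMap.sub_apply, LinearMap.smul_apply, smul_eq_mul,
      hself]
    linear_combination -(x * y) * twoRowDet_pluecker _ (Pi.single 0 1) (c y) (c x) (hRow p U 1)

/-- For a partition `λ` of length at most `m+1`, with bottom partition `λ⁽⁰⁾ = (λ₂,…)`:
`(x-y)·S_λ(U,x,y)·S_{λ⁽⁰⁾}(U) = x·S_λ(U,x)·S_{λ⁽⁰⁾}(U,y) − y·S_λ(U,y)·S_{λ⁽⁰⁾}(U,x)`. -/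
theorem schur_condensation (m : ℕ) (lam : Fin (m + 1) → ℕ) (hlam : Antitone lam)
    (U : Fin m → ℝ) (x y : ℝ) :
    (x - y) * schur lam (Fin.snoc (Fin.snoc U x : Fin (m + 1) → ℝ) y : Fin (m + 2) → ℝ)
        * schur (fun i : Fin m => lam i.succ) U
      = x * schur lam (Fin.snoc U x : Fin (m + 1) → ℝ)
            * schur (fun i : Fin m => lam i.succ) (Fin.snoc U y : Fin (m + 1) → ℝ)
        - y * schur lam (Fin.snoc U y : Fin (m + 1) → ℝ)
            * schur (fun i : Fin m => lam i.succ) (Fin.snoc U x : Fin (m + 1) → ℝ) :=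
  schur_condensation_general m lam U x y
end

section
/- Let A be an n×n matrix over a commutative ring. Denote by A with superscript columns and subscript rows removed the corresponding minors. Then det(A)·det(A_{1,n}^{1,n}) = det(A_1^1)·det(A_n^n) − det(A_1^n)·det(A_n^1), where A_{i}^{j} is A with row i and column j deleted and A_{1,n}^{1,n} is A with rows 1,n and columns 1,n deleted. -/
/-!
Jacobi's complementary minor theorem: if `M` agrees with `adj A` on a set `I` of rows and with
the identity elsewhere, then `M * A` is block triangular with diagonal blocks `det A • 1` (on `I`)
and the minor of `A` complementary to `I`, while `M` is block triangular with diagonal block the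
`I × I` minor of `adj A`. Comparing determinants gives
`det A * det (adj A)_{I,I} = det A ^ |I| * det A_{Iᶜ,Iᶜ}`, and `det A` can be cancelled
because it is not a zero divisor for the generic matrix over `ℤ[X_ij]`. For `I = {1, n}` the
entries of `adj A` are the four corner cofactors of the statement, and their signs cancel.
-/

open Matrix

namespace Matrix

variable {m n R : Type*} [Fintype m] [Fintype n] [DecidableEq m] [DecidableEq n] [CommRing R]

theorem det_mul_det_toBlocks₁₁_adjugate (A : Matrix (m ⊕ n) (m ⊕ n) R) :
    A.det * (adjugate A).toBlocks₁₁.det = A.det ^ Fintype.card m * A.toBlocks₂₂.det := by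
  set M : Matrix (m ⊕ n) (m ⊕ n) R :=
    fromBlocks (adjugate A).toBlocks₁₁ (adjugate A).toBlocks₁₂ 0 1
  have hM_inl (i : m) : M (.inl i) = adjugate A (.inl i) := by ext (_ | _) <;> rfl
  have hM_inr (i : n) : M (.inr i) = (1 : Matrix (m ⊕ n) (m ⊕ n) R) (.inr i) := by
    ext (_ | _) <;> simp [M, one_apply]
  have hMA : M * A = fromBlocks (A.det • 1) 0 A.toBlocks₂₁ A.toBlocks₂₂ := by
    ext (i | i) j
    · rw [mul_apply]
      simp only [hM_inl]
      rw [← mul_apply, adjugate_mul]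
      cases j <;> simp [one_apply]
    · rw [mul_apply]
      simp only [hM_inr]
      rw [← mul_apply, Matrix.one_mul]
      cases j <;> rfl
  calc A.det * (adjugate A).toBlocks₁₁.det = (M * A).det := by
        rw [det_mul, mul_comm, det_fromBlocks_zero₂₁, det_one, mul_one]
    _ = A.det ^ Fintype.card m * A.toBlocks₂₂.det := by
        rw [hMA, det_fromBlocks_zero₁₂, det_smul, det_one, mul_one]

theorem det_toBlocks₁₁_adjugate [Nonempty m] (A : Matrix (m ⊕ n) (m ⊕ n) R) :
    (adjugate A).toBlocks₁₁.det = A.det ^ (Fintype.card m - 1) * A.toBlocks₂₂.det := by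
  let X := mvPolynomialX (m ⊕ n) (m ⊕ n) ℤ
  suffices (adjugate X).toBlocks₁₁.det = X.det ^ (Fintype.card m - 1) * X.toBlocks₂₂.det by
    have := congrArg (MvPolynomial.aeval fun p : (m ⊕ n) × (m ⊕ n) ↦ A p.1 p.2) this
    rw [← mvPolynomialX_mapMatrix_aeval ℤ A, ← AlgHom.map_adjugate]
    simp only [map_mul, map_pow, AlgHom.map_det] at this
    exact this
  apply mul_left_cancel₀ (det_mvPolynomialX_ne_zero (m ⊕ n) ℤ)
  rw [det_mul_det_toBlocks₁₁_adjugate, ← mul_assoc, ← pow_succ',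
    Nat.sub_add_cancel Fintype.card_pos]

end Matrix

def Fin.cornersSumInner (n : ℕ) : Fin 2 ⊕ Fin n → Fin (n + 2) :=
  Sum.elim ![0, Fin.last (n + 1)] fun k ↦ k.castSucc.succ

theorem Fin.cornersSumInner_injective (n : ℕ) : Function.Injective (Fin.cornersSumInner n) := by
  refine .sumElim ?_ (Fin.succ_injective _ |>.comp (Fin.castSucc_injective _)) ?_
  · intro a b
    fin_cases a <;> fin_cases b <;> simp [(Fin.last_pos (n := n)).ne]
  · intro a k
    fin_cases a
    · exact (Fin.succ_ne_zero _).symm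
    · simpa [← Fin.succ_last, Fin.succ_inj] using (Fin.castSucc_lt_last k).ne'

noncomputable def Fin.cornersSumInnerEquiv (n : ℕ) : Fin 2 ⊕ Fin n ≃ Fin (n + 2) :=
  .ofBijective (Fin.cornersSumInner n) <| (Fintype.bijective_iff_injective_and_card _).2
    ⟨Fin.cornersSumInner_injective n, by simp [add_comm]⟩

theorem Matrix.det_adjugate_submatrix_zero_last {R : Type*} [CommRing R] {n : ℕ}
    (A : Matrix (Fin (n + 2)) (Fin (n + 2)) R) :
    ((adjugate A).submatrix ![0, Fin.last (n + 1)] ![0, Fin.last (n + 1)]).det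
      = (A.submatrix Fin.succ Fin.succ).det * (A.submatrix Fin.castSucc Fin.castSucc).det
        - (A.submatrix Fin.succ Fin.castSucc).det * (A.submatrix Fin.castSucc Fin.succ).det := by
  simp only [det_fin_two, submatrix_apply, Matrix.cons_val_zero, Matrix.cons_val_one,
    adjugate_fin_succ_eq_det_submatrix, Fin.succAbove_zero, Fin.succAbove_last, Fin.val_zero,
    Fin.val_last, zero_add, add_zero, pow_zero, one_mul, pow_add (-1 : R) (n + 1) (n + 1)]
  have hsign : (-1 : R) ^ (n + 1) * (-1) ^ (n + 1) = 1 := by rw [← mul_pow]; simp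
  linear_combination ((A.submatrix Fin.succ Fin.succ).det
      * (A.submatrix Fin.castSucc Fin.castSucc).det
    - (A.submatrix Fin.succ Fin.castSucc).det * (A.submatrix Fin.castSucc Fin.succ).det) * hsign

/-- Desnanot–Jacobi identity (Dodgson condensation):
`det(A)·det(A_{1,n}^{1,n}) = det(A_1^1)·det(A_n^n) − det(A_1^n)·det(A_n^1)`,
where subscripts denote deleted rows and superscripts deleted columns. -/
theorem dodgson_condensation {R : Type*} [CommRing R] (n : ℕ)
    (A : Matrix (Fin (n + 2)) (Fin (n + 2)) R) :
    A.det * (A.submatrix (fun i : Fin n => i.castSucc.succ) (fun j : Fin n => j.castSucc.succ)).det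
      = (A.submatrix Fin.succ Fin.succ).det * (A.submatrix Fin.castSucc Fin.castSucc).det
        - (A.submatrix Fin.succ Fin.castSucc).det * (A.submatrix Fin.castSucc Fin.succ).det := by
  let e := Fin.cornersSumInnerEquiv n
  have h := det_toBlocks₁₁_adjugate (A.submatrix e e)
  rw [adjugate_submatrix_equiv_self, det_submatrix_equiv_self, Fintype.card_fin, pow_one] at h
  rw [← det_adjugate_submatrix_zero_last]
  exact h.symm
end

section
/- Let λ be a nonempty partition of length at most n and λ⁽⁰⁾ its bottom partition (λ with its first part removed). Then f_λ(n+1)/f_{λ⁽⁰⁾}(n) = Π_{j=1}^{λ₁} ((n+1) + c_λ(1,j)) / h_λ(1,j), where c_λ(1,j) = j−1 is the content and h_λ(1,j) = λ₁ + λ'_j − j is the hook length of box (1,j) in λ. -/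
open Finset Polynomial Matrix

theorem Finset.Nat.card_antidiagonalTuple (k n : ℕ) :
    #(Finset.Nat.antidiagonalTuple k n) = k.multichoose n := by
  rw [← piAntidiag_univ_fin_eq_antidiagonalTuple]
  have h := card_finsuppAntidiag_nat_eq_multichoose (s := (univ : Finset (Fin k))) n
  rw [card_univ, Fintype.card_fin] at h
  rw [← h]
  refine card_nbij' (fun f => Finsupp.equivFunOnFinite.symm f) (fun f => f) ?_ ?_ ?_ ?_ <;>
    intro f hf <;> simp_all

theorem hh_one (k n : ℕ) : hh k n (fun _ => 1) = k.multichoose n := by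
  simp [hh, Finset.Nat.card_antidiagonalTuple]

theorem hZ_one {n : ℕ} {a : ℤ} (ha : -n ≤ a) :
    hZ (n + 1) a (fun _ => 1) = ((a + n).toNat.choose n : ℝ) := by
  unfold hZ
  split_ifs with h
  · rw [hh_one, Nat.multichoose_eq, show n + 1 + a.toNat - 1 = a.toNat + n by omega,
      show (a + n).toNat = a.toNat + n by omega, Nat.choose_symm_add]
  · rw [Nat.choose_eq_zero_of_lt (by omega), Nat.cast_zero]

theorem Fin.prod_prod_Ioi_rev {M : Type*} [CommMonoid M] {l : ℕ} (f : Fin l → Fin l → M) :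
    ∏ i, ∏ j ∈ Ioi i, f (Fin.rev j) (Fin.rev i) = ∏ i, ∏ j ∈ Ioi i, f i j := by
  rw [← Equiv.prod_comp Fin.revPerm]
  simp only [Fin.revPerm_apply, Fin.rev_rev, ← Fin.map_revPerm_Iio, prod_map]
  simp only [Equiv.coe_toEmbedding, Fin.revPerm_apply, Fin.rev_rev]
  exact prod_comm' (by simp)

theorem Matrix.det_descPochhammer_eval {R : Type*} [CommRing R] [IsDomain R] {l : ℕ}
    (z : Fin l → R) :
    det (of fun i r : Fin l => (descPochhammer R (l - 1 - r)).eval (z i)) =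
      ∏ i, ∏ j ∈ Ioi i, (z i - z j) := by
  -- reversing rows and columns makes the degrees of the column polynomials increasing
  rw [← det_submatrix_equiv_self Fin.revPerm, ← Fin.prod_prod_Ioi_rev (fun i j => z i - z j),
    ← det_vandermonde, det_eval_matrixOfPolynomials_eq_det_vandermonde _
      (fun r => descPochhammer R r) (fun r => descPochhammer_natDegree R r)
      (fun r => monic_descPochhammer R r)]
  congr
  ext i r
  simp only [submatrix_apply, of_apply, Fin.revPerm_apply, Fin.val_rev]
  congr 2
  omega

theorem Nat.add_choose_eq_sum_range (y j n : ℕ) :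
    (y + j).choose n = ∑ r ∈ range (n + 1), j.choose r * y.choose (n - r) := by
  rw [add_comm, Nat.add_choose_eq,
    Finset.Nat.sum_antidiagonal_eq_sum_range_succ (fun a b => j.choose a * y.choose b)]

theorem Matrix.det_choose_add {R : Type*} [CommRing R] {l n : ℕ} (y : Fin l → ℕ)
    (hl : l ≤ n + 1) :
    det (of fun i j : Fin l => ((y i + j).choose n : R)) =
      det (of fun i r : Fin l => ((y i).choose (n - r) : R)) := by
  have hT : (of fun r j : Fin l => ((j : ℕ).choose r : R)).det = 1 := by
    rw [det_of_isUpperTriangular fun r j (hjr : j < r) => by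
      simp [Nat.choose_eq_zero_of_lt (Fin.lt_def.mp hjr)]]
    simp
  calc _ = det (of (fun i r : Fin l => ((y i).choose (n - r) : R)) *
        of fun r j : Fin l => ((j : ℕ).choose r : R)) := by
        congr
        ext i j
        rw [of_apply, mul_apply, Nat.add_choose_eq_sum_range, Nat.cast_sum,
          ← sum_subset (range_subset_range.mpr hl), ← Fin.sum_univ_eq_sum_range]
        · simp [mul_comm]
        · intro r _ hr
          rw [Nat.choose_eq_zero_of_lt (by simp at hr; omega), zero_mul, Nat.cast_zero]
    _ = _ := by rw [det_mul, hT, mul_one]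

theorem Matrix.det_choose {K : Type*} [Field K] [CharZero K] {l n : ℕ} (y : Fin l → ℕ)
    (hl : l ≤ n + 1) :
    det (of fun i r : Fin l => ((y i).choose (n - r) : K)) =
      (∏ r : Fin l, ((n - r).factorial : K)⁻¹) *
        ((∏ i, ((y i).descFactorial (n + 1 - l) : K)) *
          ∏ i, ∏ j ∈ Ioi i, ((y i : K) - y j)) := by
  have hsplit (i r : Fin l) : ((y i).choose (n - r) : K) = ((n - r).factorial : K)⁻¹ *
      (((y i).descFactorial (n + 1 - l) : K) *
        (descPochhammer K (l - 1 - r)).eval ((y i : K) - (n + 1 - l : ℕ))) := by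
    rw [eq_inv_mul_iff_mul_eq₀ (Nat.cast_ne_zero.mpr (Nat.factorial_ne_zero _)), ← Nat.cast_mul,
      ← Nat.descFactorial_eq_factorial_mul_choose, ← descPochhammer_eval_eq_descFactorial,
      ← descPochhammer_eval_eq_descFactorial, show n - r = (n + 1 - l) + (l - 1 - r) by omega,
      ← descPochhammer_mul, eval_mul, eval_comp]
    simp
  have hfactor : of (fun i r : Fin l => ((y i).choose (n - r) : K)) =
      diagonal (fun i => ((y i).descFactorial (n + 1 - l) : K)) *
        of (fun i r : Fin l =>
          (descPochhammer K (l - 1 - r)).eval ((y i : K) - (n + 1 - l : ℕ))) *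
          diagonal (fun r : Fin l => ((n - r).factorial : K)⁻¹) := by
    ext i r
    rw [mul_diagonal, diagonal_mul, of_apply, of_apply, hsplit]
    ring
  rw [hfactor, det_mul, det_mul, det_diagonal, det_diagonal, det_descPochhammer_eval]
  simp only [sub_sub_sub_cancel_right]
  ring

theorem schur_one_eq_det_choose {l n : ℕ} (lam : Fin l → ℕ) (hl : l ≤ n + 1) :
    schur lam (fun _ : Fin (n + 1) => (1 : ℝ)) =
      det (of fun i j : Fin l => ((lam i + n - i + j).choose n : ℝ)) := by
  unfold schur
  congr
  ext i j
  rw [hZ_one (by omega)]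
  congr
  omega

theorem schur_one {l n : ℕ} (lam : Fin l → ℕ) (hl : l ≤ n + 1) :
    schur lam (fun _ : Fin (n + 1) => (1 : ℝ)) =
      (∏ r : Fin l, ((n - r).factorial : ℝ)⁻¹) *
        ((∏ i, ((lam i + n - i).descFactorial (n + 1 - l) : ℝ)) *
          ∏ i, ∏ j ∈ Ioi i, (((lam i + n - i : ℕ) : ℝ) - (lam j + n - j : ℕ))) := by
  rw [schur_one_eq_det_choose lam hl, det_choose_add (fun i => lam i + n - i) hl, det_choose _ hl]

theorem schur_one_pos {l n : ℕ} (lam : Fin l → ℕ) (hlam : Antitone lam) (hl : l ≤ n + 1) :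
    0 < schur lam (fun _ : Fin (n + 1) => (1 : ℝ)) := by
  rw [schur_one lam hl]
  refine mul_pos (prod_pos fun r _ => by positivity) (mul_pos ?_ ?_)
  · refine prod_pos fun i _ => Nat.cast_pos.mpr (Nat.descFactorial_pos.mpr ?_)
    omega
  · refine prod_pos fun i _ => prod_pos fun j hj => sub_pos.mpr (Nat.cast_lt.mpr ?_)
    have hij : i < j := mem_Ioi.mp hj
    have := hlam hij.le
    omega

theorem schur_one_succ (m : ℕ) (lam : Fin (m + 1) → ℕ) :
    schur lam (fun _ : Fin (m + 2) => (1 : ℝ)) * (m + 1).factorial =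
      (lam 0 + m + 1) * (∏ j : Fin m, ((lam 0 : ℝ) - lam j.succ + (j + 1))) *
        schur (fun i : Fin m => lam i.succ) (fun _ : Fin (m + 1) => (1 : ℝ)) := by
  have hsucc (i : Fin m) : lam i.succ + (m + 1) - (i.succ : ℕ) = lam i.succ + m - i := by
    simp only [Fin.val_succ]; omega
  have hcast (i : Fin m) : ((lam i.succ + m - i : ℕ) : ℝ) = lam i.succ + m - i := by
    rw [Nat.cast_sub (by omega)]; push_cast; ring
  rw [schur_one (n := m + 1) lam (by omega), schur_one _ m.le_succ]
  simp only [Fin.prod_univ_succ (n := m), Fin.prod_Ioi_succ, Fin.prod_Ioi_zero, hsucc,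
    Fin.val_zero, Nat.sub_zero, Nat.descFactorial_one, show m + 1 + 1 - (m + 1) = 1 by omega,
    show m + 1 - m = 1 by omega]
  simp only [Fin.val_succ, Nat.add_sub_add_right, hcast]
  push_cast
  rw [prod_congr rfl fun (j : Fin m) _ =>
    show (lam 0 : ℝ) + (m + 1) - (lam j.succ + m - j) = lam 0 - lam j.succ + (j + 1) by ring]
  field_simp
  ring

/-- `colLen lam t` is the length `λ'_t` of the `t`-th column, columns being numbered from `1`. -/
def colLen {l : ℕ} (lam : Fin l → ℕ) (t : ℕ) : ℕ := #{i | t ≤ lam i}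

theorem colLen_le_colLen {l : ℕ} (lam : Fin l → ℕ) {s t : ℕ} (hst : s ≤ t) :
    colLen lam t ≤ colLen lam s :=
  card_le_card (monotone_filter_right _ fun _ _ h => hst.trans h)

theorem colLen_le {l : ℕ} (lam : Fin l → ℕ) (t : ℕ) : colLen lam t ≤ l :=
  (card_filter_le _ _).trans (card_fin l).le

theorem lt_colLen_iff {l : ℕ} {lam : Fin l → ℕ} (hlam : Antitone lam) {i : Fin l} {t : ℕ} :
    (i : ℕ) < colLen lam t ↔ t ≤ lam i := by
  constructor
  · intro hi
    by_contra! hlt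
    have : colLen lam t ≤ #(Iio i) := card_le_card fun i' hi' => by
      simp only [mem_filter, mem_univ, true_and] at hi'
      exact mem_Iio.mpr (lt_of_not_ge fun hii' => (hlt.trans_le hi').not_ge (hlam hii'))
    rw [Fin.card_Iio] at this
    omega
  · intro ht
    have : #(Iic i) ≤ colLen lam t := card_le_card fun i' hi' => by
      simpa using ht.trans (hlam (mem_Iic.mp hi'))
    rwa [Fin.card_Iic] at this

section FirstRow

variable {m : ℕ} {lam : Fin (m + 1) → ℕ}

/-- The hook length `h_λ(1, j + 1)`. -/
def firstRowHook (lam : Fin (m + 1) → ℕ) (j : ℕ) : ℕ := lam 0 + colLen lam (j + 1) - (j + 1)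

theorem colLen_pos (hlam : Antitone lam) {t : ℕ} (ht : t ≤ lam 0) : 0 < colLen lam t :=
  (lt_colLen_iff (i := 0) hlam).mpr ht

theorem firstRowHook_injOn (hlam : Antitone lam) :
    Set.InjOn (firstRowHook lam) (range (lam 0)) := by
  intro j hj j' hj' hjj'
  wlog h : j ≤ j' generalizing j j'
  · exact (this hj' hj hjj'.symm (le_of_not_ge h)).symm
  have := colLen_le_colLen lam (by omega : j + 1 ≤ j' + 1)
  have := mem_range.mp (mem_coe.mp hj')
  have := colLen_pos hlam (by omega : j' + 1 ≤ lam 0)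
  simp only [firstRowHook] at hjj'
  omega

theorem firstRowHook_ne (hlam : Antitone lam) {j : ℕ} (hj : j < lam 0) (i : Fin m) :
    firstRowHook lam j ≠ lam 0 - lam i.succ + (i + 1) := by
  have hiff := lt_colLen_iff hlam (i := i.succ) (t := j + 1)
  rw [Fin.val_succ] at hiff
  have := colLen_pos hlam (by omega : j + 1 ≤ lam 0)
  have := hlam (Fin.zero_le i.succ)
  simp only [firstRowHook]
  omega

theorem prod_firstRowHook_mul_prod (hlam : Antitone lam) :
    (∏ j ∈ range (lam 0), firstRowHook lam j) * ∏ i : Fin m, (lam 0 - lam i.succ + (i + 1)) =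
      (lam 0 + m).factorial := by
  set v : Fin m → ℕ := fun i => lam 0 - lam i.succ + (i + 1)
  have hv : StrictMono v := fun i i' hii' => by
    have := hlam (Fin.succ_le_succ_iff.mpr hii'.le)
    have : (i : ℕ) < i' := hii'
    have := hlam (Fin.zero_le i.succ)
    simp only [v]; omega
  have hdisj : Disjoint (univ.image v) ((range (lam 0)).image (firstRowHook lam)) := by
    simp only [disjoint_left, mem_image, mem_univ, true_and, mem_range, not_exists, not_and]
    rintro _ ⟨i, rfl⟩ j hj
    exact firstRowHook_ne hlam hj i
  have hsub : univ.image v ∪ (range (lam 0)).image (firstRowHook lam) ⊆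
      Ico 1 (lam 0 + m + 1) := by
    simp only [union_subset_iff, image_subset_iff, mem_Ico, mem_range]
    refine ⟨fun i _ => ?_, fun j hj => ?_⟩
    · have := i.isLt
      simp only [v]; omega
    · have := colLen_pos hlam (by omega : j + 1 ≤ lam 0)
      have := colLen_le lam (j + 1)
      simp only [firstRowHook]; omega
  have hunion : univ.image v ∪ (range (lam 0)).image (firstRowHook lam) =
      Ico 1 (lam 0 + m + 1) := by
    refine eq_of_subset_of_card_le hsub ?_
    rw [card_union_of_disjoint hdisj, card_image_of_injective _ hv.injective,
      card_image_of_injOn (firstRowHook_injOn hlam)]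
    simp
    omega
  rw [← prod_Ico_id_eq_factorial, ← hunion, prod_union hdisj,
    prod_image (fun _ _ _ _ h => hv.injective h), prod_image (firstRowHook_injOn hlam), mul_comm]

theorem prod_firstRowHook_mul_prod_cast (hlam : Antitone lam) :
    (∏ j ∈ range (lam 0), ((lam 0 : ℝ) + colLen lam (j + 1) - (j + 1))) *
      ∏ i : Fin m, ((lam 0 : ℝ) - lam i.succ + (i + 1)) = (lam 0 + m).factorial := by
  rw [← prod_firstRowHook_mul_prod hlam, Nat.cast_mul, Nat.cast_prod, Nat.cast_prod]
  congr 1 <;> refine prod_congr rfl fun j hj => ?_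
  · have := mem_range.mp hj
    have := colLen_pos hlam (by omega : j + 1 ≤ lam 0)
    rw [firstRowHook, Nat.cast_sub (by omega)]
    push_cast; ring
  · rw [Nat.cast_add, Nat.cast_sub (hlam (Fin.zero_le _))]
    push_cast; ring

end FirstRow

theorem hook_content_ratio_general (m : ℕ) (lam : Fin (m + 1) → ℕ) (hlam : Antitone lam) :
    schur lam (fun _ : Fin (m + 2) => (1 : ℝ)) /
        schur (fun i : Fin m => lam i.succ) (fun _ : Fin (m + 1) => (1 : ℝ))
      = ∏ j ∈ Finset.range (lam 0),
          ((m + 2 : ℝ) + (j : ℝ)) /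
            ((lam 0 : ℝ) + ((Finset.univ.filter fun i : Fin (m + 1) => j + 1 ≤ lam i).card : ℝ)
              - ((j : ℝ) + 1)) := by
  change _ = ∏ j ∈ range (lam 0), _ / ((lam 0 : ℝ) + colLen lam (j + 1) - (j + 1))
  have hden := schur_one_pos (n := m) (fun i : Fin m => lam i.succ)
    (hlam.comp_monotone Fin.strictMono_succ.monotone) m.le_succ
  have hhook := prod_firstRowHook_mul_prod_cast hlam
  have hasc : (∏ j ∈ range (lam 0), ((m + 2 : ℝ) + j)) * (m + 1).factorial =
      (lam 0 + m + 1) * (lam 0 + m).factorial := by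
    have h := Nat.factorial_mul_ascFactorial (m + 1) (lam 0)
    rw [Nat.ascFactorial_eq_prod_range, show m + 1 + lam 0 = lam 0 + m + 1 by omega,
      Nat.factorial_succ, mul_comm] at h
    exact_mod_cast h
  have hhook_ne : (∏ j ∈ range (lam 0), ((lam 0 : ℝ) + colLen lam (j + 1) - (j + 1))) ≠ 0 :=
    left_ne_zero_of_mul (by rw [hhook]; positivity)
  rw [prod_div_distrib, div_eq_div_iff hden.ne' hhook_ne]
  refine mul_right_cancel₀ (Nat.cast_ne_zero.mpr (m + 1).factorial_ne_zero :
    ((m + 1).factorial : ℝ) ≠ 0) ?_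
  linear_combination (∏ j ∈ range (lam 0), ((lam 0 : ℝ) + colLen lam (j + 1) - (j + 1))) *
    schur_one_succ m lam + ((lam 0 : ℝ) + m + 1) *
      schur (fun i : Fin m => lam i.succ) (fun _ : Fin (m + 1) => (1 : ℝ)) * hhook -
    schur (fun i : Fin m => lam i.succ) (fun _ : Fin (m + 1) => (1 : ℝ)) * hasc

/-- For a nonempty partition `λ` of length at most `n = m+1` with bottom partition `λ⁽⁰⁾`:
`f_λ(n+1)/f_{λ⁽⁰⁾}(n) = Π_{j=1}^{λ₁} ((n+1)+c_λ(1,j))/h_λ(1,j)`, where `c_λ(1,j) = j−1`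
and `h_λ(1,j) = λ₁ + λ'_j − j`, with `f_μ(m) = S_μ(1,…,1)` (m ones). -/
theorem hook_content_ratio (m : ℕ) (lam : Fin (m + 1) → ℕ) (hlam : Antitone lam)
    (hne : 1 ≤ lam 0) :
    schur lam (fun _ : Fin (m + 2) => (1 : ℝ)) /
        schur (fun i : Fin m => lam i.succ) (fun _ : Fin (m + 1) => (1 : ℝ))
      = ∏ j ∈ Finset.range (lam 0),
          ((m + 2 : ℝ) + (j : ℝ)) /
            ((lam 0 : ℝ) + ((Finset.univ.filter fun i : Fin (m + 1) => j + 1 ≤ lam i).card : ℝ)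
              - ((j : ℝ) + 1)) :=
  hook_content_ratio_general m lam hlam
end
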